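/- arXiv:1009.2337 — 7 statements merged into one kernel-verified Lean document; each statement's English description precedes it below -/
import Mathlib

section
/- The monoid N₂¹, obtained from the two-element null semigroup by adjoining an identity element, satisfies a semigroup identity u ≈ v if and only if C(u) = C(v) and S(u) = S(v), where C denotes the set of letters occurring in a word and S denotes the set of letters occurring exactly once. -/
/-- Evaluation of the nonempty word `x :: w` under the substitution `φ`. -/
def evalWord {X S : Type*} [Mul S] (φ : X → S) : X → List X → S
  | x, [] => φ x
  | x, y :: l => φ x * evalWord φ y l

/-- The monoid N₂¹ = {1, a, 0} with a·a = 0 and 0 absorbing. -/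
inductive N21 : Type | one | a | zero

def N21.mul : N21 → N21 → N21
  | .one, t => t
  | s, .one => s
  | _, _ => .zero

instance : Semigroup N21 where
  mul := N21.mul
  mul_assoc := by intro x y z; cases x <;> cases y <;> cases z <;> rfl

def N21.c : N21 → ℕ | .one => 0 | .a => 1 | .zero => 2

lemma N21.c_le (s : N21) : s.c ≤ 2 := by cases s <;> simp [N21.c]

lemma N21.c_mul (s t : N21) : (s * t).c = min 2 (s.c + t.c) := by
  cases s <;> cases t <;> rfl

lemma N21.c_inj {s t : N21} (h : s.c = t.c) : s = t := by
  cases s <;> cases t <;> simp_all [N21.c]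

lemma eval_c {X : Type*} (φ : X → N21) (x : X) (w : List X) :
    (evalWord φ x w).c = min 2 (((x :: w).map fun y => (φ y).c).sum) := by
  induction w generalizing x with
  | nil => have := N21.c_le (φ x); simp [evalWord]; omega
  | cons y l ih =>
      rw [evalWord, N21.c_mul, ih y]
      simp only [List.map_cons, List.sum_cons]
      omega

lemma map_ind_sum {X : Type*} [DecidableEq X] (l : List X) (x : X) (c : ℕ) :
    (l.map fun y => if y = x then c else 0).sum = c * l.count x := by
  induction l with
  | nil => simp
  | cons z l ih =>
      simp only [List.map_cons, List.sum_cons, ih, List.count_cons]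
      by_cases h : z = x <;> simp [h, Nat.mul_add, Nat.add_comm]

lemma sum_eq_one_iff {X : Type*} [DecidableEq X] (s : Finset X) (g : X → ℕ) :
    (∑ x ∈ s, g x) = 1 ↔ ∃ x ∈ s, g x = 1 ∧ ∀ y ∈ s, y ≠ x → g y = 0 := by
  induction s using Finset.induction_on with
  | empty => simp
  | @insert z s hx ih =>
      rw [Finset.sum_insert hx]
      constructor
      · intro h
        rcases Nat.eq_zero_or_pos (g z) with hz | hz
        · rw [hz, zero_add] at h
          obtain ⟨x, hxs, hx1, hall⟩ := ih.mp h
          exact ⟨x, Finset.mem_insert_of_mem hxs, hx1, by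
            intro y hy hne
            rcases Finset.mem_insert.mp hy with rfl | hy
            · exact hz
            · exact hall y hy hne⟩
        · have hz1 : g z = 1 := by omega
          have hs0 : (∑ x ∈ s, g x) = 0 := by omega
          refine ⟨z, Finset.mem_insert_self _ _, hz1, ?_⟩
          intro y hy hne
          rcases Finset.mem_insert.mp hy with rfl | hy
          · exact absurd rfl hne
          · exact (Finset.sum_eq_zero_iff).mp hs0 y hy
      · rintro ⟨x, hxs, hx1, hall⟩
        rcases Finset.mem_insert.mp hxs with rfl | hxs
        · have : (∑ x ∈ s, g x) = 0 := Finset.sum_eq_zero fun y hy =>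
            hall y (Finset.mem_insert_of_mem hy) (by rintro rfl; exact hx hy)
          omega
        · have hz : g z = 0 := hall z (Finset.mem_insert_self _ _)
            (by rintro rfl; exact hx hxs)
          have : (∑ x ∈ s, g x) = 1 := ih.mpr ⟨x, hxs, hx1, fun y hy hne =>
            hall y (Finset.mem_insert_of_mem hy) hne⟩
          omega

/-- N₂¹ satisfies the identity `a :: u ≈ b :: v` iff the contents coincide and the
sets of letters occurring exactly once coincide. -/
theorem N21_satisfies_iff_content_and_simple {X : Type*} [DecidableEq X]
    (a b : X) (u v : List X) :
    (∀ φ : X → N21, evalWord φ a u = evalWord φ b v) ↔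
      ((∀ x : X, x ∈ a :: u ↔ x ∈ b :: v) ∧
        (∀ x : X, (a :: u).count x = 1 ↔ (b :: v).count x = 1)) := by
  set U := a :: u with hU
  set V := b :: v with hV
  have key : (∀ φ : X → N21, evalWord φ a u = evalWord φ b v) ↔
      ∀ f : X → ℕ, min 2 ((U.map f).sum) = min 2 ((V.map f).sum) := by
    constructor
    · intro h f
      set φ : X → N21 := fun x => if f x = 0 then N21.one else if f x = 1 then N21.a else N21.zero with hφ
      have hc : ∀ x, (φ x).c = min 2 (f x) := by
        intro x; simp only [hφ]; split_ifs <;> simp_all [N21.c] <;> omega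
      have key2 := congrArg N21.c (h φ)
      rw [eval_c, eval_c] at key2
      have cap : ∀ (l : List X), min 2 ((l.map fun y => (φ y).c).sum) = min 2 ((l.map f).sum) := by
        intro l
        induction l with
        | nil => rfl
        | cons x l ih =>
            simp only [List.map_cons, List.sum_cons] at *
            rw [hc]
            omega
      rw [cap U, cap V] at key2
      exact key2
    · intro h φ
      apply N21.c_inj
      rw [eval_c, eval_c]
      exact h fun y => (φ y).c
  rw [key]
  constructor
  · intro h
    constructor
    · intro x
      have h2 := h (fun y => if y = x then 2 else 0)
      rw [map_ind_sum, map_ind_sum] at h2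
      rw [← List.count_pos_iff, ← List.count_pos_iff]
      omega
    · intro x
      have h1 := h (fun y => if y = x then 1 else 0)
      rw [map_ind_sum, map_ind_sum, one_mul, one_mul] at h1
      omega
  · rintro ⟨hC, hS⟩ f
    have hFin : U.toFinset = V.toFinset := by
      ext x; simp only [List.mem_toFinset]; exact hC x
    rw [Finset.sum_list_map_count, Finset.sum_list_map_count, ← hFin]
    set s := U.toFinset with hs
    have hcount : ∀ x ∈ s, 1 ≤ U.count x ∧ 1 ≤ V.count x := by
      intro x hx
      rw [hs, List.mem_toFinset] at hx
      exact ⟨List.one_le_count_iff.mpr hx, List.one_le_count_iff.mpr ((hC x).mp hx)⟩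
    simp only [smul_eq_mul]
    have h0 : (∑ x ∈ s, U.count x * f x) = 0 ↔ (∑ x ∈ s, V.count x * f x) = 0 := by
      rw [Finset.sum_eq_zero_iff, Finset.sum_eq_zero_iff]
      constructor <;> intro h x hx <;> have h1 := hcount x hx <;> have h2 := h x hx <;>
        rcases Nat.mul_eq_zero.mp h2 with h3 | h3 <;> first | omega | simp [h3]
    have h1 : (∑ x ∈ s, U.count x * f x) = 1 ↔ (∑ x ∈ s, V.count x * f x) = 1 := by
      rw [sum_eq_one_iff, sum_eq_one_iff]
      constructor
      · rintro ⟨x, hx, hx1, hall⟩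
        have hUc := Nat.eq_one_of_mul_eq_one_right hx1
        have hf := Nat.eq_one_of_mul_eq_one_left hx1
        refine ⟨x, hx, by rw [(hS x).mp hUc, hf], ?_⟩
        intro y hy hne
        have h2 := hall y hy hne
        have hc := hcount y hy
        rcases Nat.mul_eq_zero.mp h2 with h3 | h3
        · omega
        · simp [h3]
      · rintro ⟨x, hx, hx1, hall⟩
        have hVc := Nat.eq_one_of_mul_eq_one_right hx1
        have hf := Nat.eq_one_of_mul_eq_one_left hx1
        refine ⟨x, hx, by rw [(hS x).mpr hVc, hf], ?_⟩
        intro y hy hne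
        have h2 := hall y hy hne
        have hc := hcount y hy
        rcases Nat.mul_eq_zero.mp h2 with h3 | h3
        · omega
        · simp [h3]
    omega
end

section
/- The monoid L₂¹ (two-element left-zero semigroup with adjoined identity) satisfies a semigroup identity u ≈ v if and only if the left cores of u and v coincide, where the left core of a word is the simple word obtained by retaining only the first occurrence of each letter. -/
/-- The left core of a word: retain only the first occurrence of each letter. -/
def leftCore {X : Type*} [DecidableEq X] : List X → List X
  | [] => []
  | x :: l => x :: (leftCore l).filter (· ≠ x)

/-- The monoid L₂¹: the two-element left-zero semigroup with an identity adjoined. -/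
inductive L21 : Type | one | a | b

def L21.mul : L21 → L21 → L21
  | .one, t => t
  | s, .one => s
  | .a, _ => .a
  | .b, _ => .b

instance : Semigroup L21 where
  mul := L21.mul
  mul_assoc := by intro x y z; cases x <;> cases y <;> cases z <;> rfl

namespace L21aux

open L21

def F {X : Type*} (φ : X → L21) : List X → L21
  | [] => .one
  | x :: l => φ x * F φ l

lemma F_nil {X : Type*} (φ : X → L21) : F φ ([] : List X) = .one := rfl

lemma F_cons {X : Type*} (φ : X → L21) (x : X) (l : List X) :
    F φ (x :: l) = φ x * F φ l := rfl

lemma one_mul' (t : L21) : L21.one * t = t := by cases t <;> rfl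

lemma mul_one' (s : L21) : s * L21.one = s := by cases s <;> rfl

lemma mul_of_ne_one {s : L21} (h : s ≠ .one) (t : L21) : s * t = s := by
  cases s <;> cases t <;> first | rfl | exact absurd rfl h

lemma eval_eq_F {X : Type*} (φ : X → L21) (x : X) (w : List X) :
    evalWord φ x w = F φ (x :: w) := by
  induction w generalizing x with
  | nil => rw [evalWord, F_cons, F_nil, mul_one']
  | cons y l ih => rw [evalWord, F_cons, ih y]

lemma F_filter {X : Type*} [DecidableEq X] (φ : X → L21) (x : X)
    (h : φ x = .one) (m : List X) :
    F φ (m.filter (· ≠ x)) = F φ m := by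
  induction m with
  | nil => rfl
  | cons y l ih =>
    by_cases hy : y = x
    · subst hy
      rw [List.filter_cons_of_neg (by simp), ih, F_cons, h, one_mul']
    · rw [List.filter_cons_of_pos (by simpa using hy), F_cons, F_cons, ih]

lemma F_leftCore {X : Type*} [DecidableEq X] (φ : X → L21) (l : List X) :
    F φ (leftCore l) = F φ l := by
  induction l with
  | nil => rfl
  | cons x l ih =>
    show F φ (x :: (leftCore l).filter (· ≠ x)) = F φ (x :: l)
    rw [F_cons, F_cons]
    by_cases h : φ x = .one
    · rw [h, one_mul', one_mul', F_filter φ x h, ih]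
    · rw [mul_of_ne_one h, mul_of_ne_one h]

lemma F_congr {X : Type*} {φ ψ : X → L21} {m : List X}
    (h : ∀ z ∈ m, φ z = ψ z) : F φ m = F ψ m := by
  induction m with
  | nil => rfl
  | cons y l ih =>
    rw [F_cons, F_cons, h y (by simp), ih (fun z hz => h z (by simp [hz]))]

lemma nodup_leftCore {X : Type*} [DecidableEq X] (l : List X) :
    (leftCore l).Nodup := by
  induction l with
  | nil => exact List.nodup_nil
  | cons x l ih =>
    refine List.nodup_cons.mpr ⟨?_, ih.filter _⟩
    intro h
    rcases List.mem_filter.mp h with ⟨_, h2⟩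
    simp at h2

lemma F_inj {X : Type*} [DecidableEq X] :
    ∀ (c d : List X), (∀ φ : X → L21, F φ c = F φ d) →
      c.Nodup → d.Nodup → c = d := by
  intro c
  induction c with
  | nil =>
    intro d h _ _
    cases d with
    | nil => rfl
    | cons y d' =>
      have := h (fun _ => .a)
      rw [F_nil, F_cons, mul_of_ne_one (by simp)] at this
      exact absurd this (by simp)
  | cons x c' ih =>
    intro d h hc hd
    cases d with
    | nil =>
      have := h (fun _ => .a)
      rw [F_nil, F_cons, mul_of_ne_one (by simp)] at this
      exact absurd this (by simp)
    | cons y d' =>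
      have hxy : x = y := by
        have := h (fun z => if z = x then .a else .b)
        rw [F_cons, F_cons, if_pos rfl] at this
        rw [mul_of_ne_one (s := L21.a) (by simp)] at this
        by_contra hne
        rw [if_neg (fun he : y = x => hne he.symm),
            mul_of_ne_one (s := L21.b) (by simp)] at this
        exact L21.noConfusion this
      subst hxy
      have hc' := List.nodup_cons.mp hc
      have hd' := List.nodup_cons.mp hd
      have key : ∀ φ : X → L21, F φ c' = F φ d' := by
        intro φ
        set ψ : X → L21 := fun z => if z = x then .one else φ z with hψ
        have h1 : F ψ c' = F φ c' :=
          F_congr (fun z hz => by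
            rw [hψ]; exact if_neg (fun he : z = x => hc'.1 (he ▸ hz)))
        have h2 : F ψ d' = F φ d' :=
          F_congr (fun z hz => by
            rw [hψ]; exact if_neg (fun he : z = x => hd'.1 (he ▸ hz)))
        have h3 := h ψ
        have hx : ψ x = .one := by rw [hψ]; exact if_pos rfl
        rw [F_cons, F_cons, hx, one_mul', one_mul'] at h3
        rw [← h1, ← h2, h3]
      rw [ih d' key hc'.2 hd'.2]

end L21aux

/-- L₂¹ satisfies the identity `a :: u ≈ b :: v` iff the left cores of the
two words coincide. -/
theorem L21_satisfies_iff_leftCore {X : Type*} [DecidableEq X]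
    (a b : X) (u v : List X) :
    (∀ φ : X → L21, evalWord φ a u = evalWord φ b v) ↔
      leftCore (a :: u) = leftCore (b :: v) := by
  constructor
  · intro h
    apply L21aux.F_inj _ _ _ (L21aux.nodup_leftCore _) (L21aux.nodup_leftCore _)
    intro φ
    rw [L21aux.F_leftCore, L21aux.F_leftCore, ← L21aux.eval_eq_F, ← L21aux.eval_eq_F, h φ]
  · intro h φ
    rw [L21aux.eval_eq_F, L21aux.eval_eq_F, ← L21aux.F_leftCore φ (a :: u),
        ← L21aux.F_leftCore φ (b :: v), h]
end

section
/- The semigroup A = ⟨x, y | x = x², y² = 0, xy = yx⟩ generates the same variety as the monoid N₂¹; in particular, A satisfies exactly those identities u ≈ v for which C(u) = C(v) and S(u) = S(v). -/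
/-- The 4-element commutative semigroup A = ⟨x, y | x = x², y² = 0, xy = yx⟩. -/
inductive SgpA : Type | x | y | xy | zero

def SgpA.mul : SgpA → SgpA → SgpA
  | .x, .x => .x
  | .x, .y => .xy
  | .y, .x => .xy
  | .x, .xy => .xy
  | .xy, .x => .xy
  | _, _ => .zero

instance : Semigroup SgpA where
  mul := SgpA.mul
  mul_assoc := by intro a b c; cases a <;> cases b <;> cases c <;> rfl

section Identities

def SatisfiesIdentity (S : Type*) [Mul S] {X : Type*} (a : X) (u : List X) (b : X) (v : List X) :
    Prop :=
  ∀ φ : X → S, evalWord φ a u = evalWord φ b v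

variable {X S T : Type*} [Mul S] [Mul T]

theorem evalWord_map (f : S →ₙ* T) (φ : X → S) (c : X) (l : List X) :
    evalWord (f ∘ φ) c l = f (evalWord φ c l) := by
  induction l generalizing c with
  | nil => rfl
  | cons d l ih => simp only [evalWord, ih, map_mul, Function.comp_apply]

variable {a b : X} {u v : List X}

theorem SatisfiesIdentity.of_surjective (f : S →ₙ* T) (hf : Function.Surjective f)
    (h : SatisfiesIdentity S a u b v) : SatisfiesIdentity T a u b v := by
  intro ψ
  have hψ : ψ = f ∘ (Function.surjInv hf ∘ ψ) :=
    funext fun t => (Function.surjInv_eq hf (ψ t)).symm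
  rw [hψ, evalWord_map, evalWord_map, h]

theorem SatisfiesIdentity.of_injective (f : S →ₙ* T) (hf : Function.Injective f)
    (h : SatisfiesIdentity T a u b v) : SatisfiesIdentity S a u b v :=
  fun φ => hf (by rw [← evalWord_map, ← evalWord_map]; exact h _)

theorem SatisfiesIdentity.prod (hS : SatisfiesIdentity S a u b v)
    (hT : SatisfiesIdentity T a u b v) : SatisfiesIdentity (S × T) a u b v := by
  intro φ
  ext
  · exact (evalWord_map (MulHom.fst S T) φ a u).symm.trans ((hS _).trans (evalWord_map _ φ b v))
  · exact (evalWord_map (MulHom.snd S T) φ a u).symm.trans ((hT _).trans (evalWord_map _ φ b v))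

end Identities

section Counting

variable {X : Type*} {w₁ w₂ : List X}

theorem List.countP_eq_zero_iff_of_mem_iff (hmem : ∀ x, x ∈ w₁ ↔ x ∈ w₂) (p : X → Bool) :
    w₁.countP p = 0 ↔ w₂.countP p = 0 := by
  simp_rw [List.countP_eq_zero, hmem]

variable [DecidableEq X]

theorem List.countP_eq_one_iff (p : X → Bool) (w : List X) :
    w.countP p = 1 ↔ ∃ x, p x ∧ w.count x = 1 ∧ ∀ y ∈ w, p y → y = x := by
  rw [List.countP_eq_length_filter]
  constructor
  · intro h
    obtain ⟨x, hx⟩ := List.length_eq_one_iff.1 h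
    have hxp : x ∈ w.filter p := hx ▸ List.mem_singleton_self x
    refine ⟨x, (List.mem_filter.1 hxp).2, ?_, fun y hy hpy => ?_⟩
    · rw [← List.count_filter (List.mem_filter.1 hxp).2, hx, List.count_singleton_self]
    · simpa [hx] using List.mem_filter.2 ⟨hy, hpy⟩
  · rintro ⟨x, hpx, hx, huniq⟩
    have hrep : w.filter p = List.replicate (w.filter p).length x :=
      List.eq_replicate_of_mem fun y hy =>
        huniq y (List.mem_filter.1 hy).1 (List.mem_filter.1 hy).2
    rw [← hx, ← List.count_filter hpx, hrep, List.count_replicate_self, List.length_replicate]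

theorem List.countP_eq_one_iff_of_count_eq_one_iff (hmem : ∀ x, x ∈ w₁ ↔ x ∈ w₂)
    (hone : ∀ x, w₁.count x = 1 ↔ w₂.count x = 1) (p : X → Bool) :
    w₁.countP p = 1 ↔ w₂.countP p = 1 := by
  simp_rw [List.countP_eq_one_iff, hone, hmem]

end Counting

namespace N21

def isZero : N21 → Bool
  | .zero => true
  | _ => false

def isA : N21 → Bool
  | .a => true
  | _ => false

def ofCounts : ℕ → ℕ → N21
  | 0, 0 => .one
  | 0, 1 => .a
  | _, _ => .zero

theorem mul_ofCounts (s : N21) (z k : ℕ) :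
    s * ofCounts z k =
      ofCounts (z + if s.isZero then 1 else 0) (k + if s.isA then 1 else 0) := by
  rcases z with _ | z <;> rcases k with _ | _ | k <;> cases s <;> rfl

theorem evalWord_eq_ofCounts {X : Type*} (ψ : X → N21) (c : X) (l : List X) :
    evalWord ψ c l =
      ofCounts ((c :: l).countP fun t => (ψ t).isZero) ((c :: l).countP fun t => (ψ t).isA) := by
  induction l generalizing c with
  | nil => cases h : ψ c <;> simp [evalWord, ofCounts, isZero, isA, h]
  | cons d l ih =>
    simp only [evalWord, ih, mul_ofCounts, List.countP_cons]

theorem ofCounts_zero_left_inj {k₁ k₂ : ℕ} (h : ofCounts 0 k₁ = ofCounts 0 k₂) :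
    (k₁ = 0 ↔ k₂ = 0) ∧ (k₁ = 1 ↔ k₂ = 1) := by
  rcases k₁ with _ | _ | k₁ <;> rcases k₂ with _ | _ | k₂ <;> simp_all [ofCounts]

theorem ofCounts_congr {z₁ z₂ k₁ k₂ : ℕ} (hz : z₁ = 0 ↔ z₂ = 0) (hk₀ : k₁ = 0 ↔ k₂ = 0)
    (hk₁ : k₁ = 1 ↔ k₂ = 1) : ofCounts z₁ k₁ = ofCounts z₂ k₂ := by
  rcases z₁ with _ | z₁ <;> rcases z₂ with _ | z₂ <;> rcases k₁ with _ | _ | k₁ <;>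
    rcases k₂ with _ | _ | k₂ <;> first | rfl | omega

theorem evalWord_cond_beq {X : Type*} [DecidableEq X] (x c : X) (l : List X) :
    evalWord (fun t => cond (t == x) a one) c l = ofCounts 0 ((c :: l).count x) := by
  have hA : (fun t => (cond (t == x) a one).isA) = (· == x) :=
    funext fun t => by cases t == x <;> rfl
  have hZ : ((c :: l).countP fun t => (cond (t == x) a one).isZero) = 0 :=
    List.countP_eq_zero.2 fun t _ => by cases t == x <;> simp [isZero]
  rw [evalWord_eq_ofCounts, hA, hZ]
  rfl

end N21

theorem satisfiesIdentity_N21_iff {X : Type*} [DecidableEq X] (a b : X) (u v : List X) :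
    SatisfiesIdentity N21 a u b v ↔
      (∀ x : X, x ∈ a :: u ↔ x ∈ b :: v) ∧
        (∀ x : X, (a :: u).count x = 1 ↔ (b :: v).count x = 1) := by
  constructor
  · intro h
    have hcount (x : X) : ((a :: u).count x = 0 ↔ (b :: v).count x = 0) ∧
        ((a :: u).count x = 1 ↔ (b :: v).count x = 1) := by
      have hx := h fun t => cond (t == x) N21.a N21.one
      rw [N21.evalWord_cond_beq, N21.evalWord_cond_beq] at hx
      exact N21.ofCounts_zero_left_inj hx
    refine ⟨fun x => ?_, fun x => (hcount x).2⟩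
    simpa only [List.count_eq_zero, not_iff_not] using (hcount x).1
  · rintro ⟨hmem, hone⟩ ψ
    rw [N21.evalWord_eq_ofCounts, N21.evalWord_eq_ofCounts]
    exact N21.ofCounts_congr (List.countP_eq_zero_iff_of_mem_iff hmem _)
      (List.countP_eq_zero_iff_of_mem_iff hmem _)
      (List.countP_eq_one_iff_of_count_eq_one_iff hmem hone _)

def SgpA.toN21Sq : SgpA →ₙ* N21 × N21 where
  toFun
    | .x => (.one, .zero)
    | .y => (.a, .a)
    | .xy => (.a, .zero)
    | .zero => (.zero, .zero)
  map_mul' s t := by cases s <;> cases t <;> rfl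

theorem SgpA.toN21Sq_injective : Function.Injective SgpA.toN21Sq := by
  intro s t h
  cases s <;> cases t <;> first | rfl | cases h

theorem SgpA.fst_comp_toN21Sq_surjective :
    Function.Surjective ((MulHom.fst N21 N21).comp SgpA.toN21Sq) := by
  rintro (_ | _ | _)
  exacts [⟨.x, rfl⟩, ⟨.y, rfl⟩, ⟨.zero, rfl⟩]

/-- A satisfies the same identities as N₂¹, namely exactly those identities
`a :: u ≈ b :: v` with equal contents and equal sets of simple letters. -/
theorem SgpA_same_variety_as_N21 {X : Type*} [DecidableEq X]
    (a b : X) (u v : List X) :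
    ((∀ φ : X → SgpA, evalWord φ a u = evalWord φ b v) ↔
      (∀ ψ : X → N21, evalWord ψ a u = evalWord ψ b v)) ∧
    ((∀ φ : X → SgpA, evalWord φ a u = evalWord φ b v) ↔
      ((∀ x : X, x ∈ a :: u ↔ x ∈ b :: v) ∧
        (∀ x : X, (a :: u).count x = 1 ↔ (b :: v).count x = 1))) := by
  have hA_iff_N21 : SatisfiesIdentity SgpA a u b v ↔ SatisfiesIdentity N21 a u b v :=
    ⟨.of_surjective _ SgpA.fst_comp_toN21Sq_surjective,
      fun h => .of_injective _ SgpA.toN21Sq_injective (h.prod h)⟩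
  exact ⟨hA_iff_N21, hA_iff_N21.trans (satisfiesIdentity_N21_iff a b u v)⟩
end

section
/- The semigroup B = ⟨x, y | x² = 0, y² = 0, xyx = yxy⟩ satisfies a non-trivial identity u ≈ v if and only if one of the following holds: (1) neither u nor v is (4,2)-trivial; (2) u ≈ v has the form abc ≈ cba for distinct letters a, b, c; (3) u ≈ v has the form aba ≈ bab for distinct letters a, b. -/
/-- A word is (4,2)-trivial iff it has length at most 3 and contains no factor z²
(no two equal consecutive letters). -/
def Trivial42 {X : Type*} (w : List X) : Prop :=
  w.length ≤ 3 ∧ w.Chain' (· ≠ ·)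

/-- The 6-element nilpotent semigroup B = ⟨x, y | x² = 0, y² = 0, xyx = yxy⟩,
with elements x, y, xy, yx, xyx (= yxy) and 0. -/
inductive SgpB : Type | x | y | xy | yx | xyx | zero

def SgpB.mul : SgpB → SgpB → SgpB
  | .x, .y => .xy
  | .x, .yx => .xyx
  | .y, .x => .yx
  | .y, .xy => .xyx
  | .xy, .x => .xyx
  | .yx, .y => .xyx
  | _, _ => .zero

instance : Semigroup SgpB where
  mul := SgpB.mul
  mul_assoc := by intro a b c; cases a <;> cases b <;> cases c <;> rfl

/-!
Products of four elements of B vanish, as do products containing a square `s * s`, so every word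
that is not (4,2)-trivial evaluates to 0. A (4,2)-trivial word `w` is recovered from its values
under substitutions of `x`, `y`, `0` for the letters: `x`, `xy` and `xyx` are products of the
generators in essentially one way each (`xyx = yxy` being the only ambiguity), which forces the
other side of the identity to be `w`, or `q p q` when `w = p q p`, or `r q p` when `w = p q r`.
These exceptions are identities because `s (t u) = u (t s)` and `s (t s) = t (s t)` in B.
-/

namespace SgpB

instance : DecidableEq SgpB := fun s t => by
  cases s <;> cases t <;> first | exact isTrue rfl | exact isFalse nofun

instance : Fintype SgpB :=
  ⟨{.x, .y, .xy, .yx, .xyx, .zero}, fun s => by cases s <;> decide⟩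

def IsGenOrZero (s : SgpB) : Prop := s = .x ∨ s = .y ∨ s = .zero

instance : DecidablePred IsGenOrZero := fun _ => by unfold IsGenOrZero; infer_instance

protected theorem mul_self (s : SgpB) : s * s = .zero := by cases s <;> rfl
protected theorem zero_mul (s : SgpB) : .zero * s = .zero := by cases s <;> rfl
protected theorem mul_zero (s : SgpB) : s * .zero = .zero := by cases s <;> rfl

theorem mul_mul_rev : ∀ s t u : SgpB, s * (t * u) = u * (t * s) := by decide
theorem braid : ∀ s t : SgpB, s * (t * s) = t * (s * t) := by decide

theorem mul_mul_mul_eq_zero : ∀ s t u w : SgpB, s * (t * (u * w)) = .zero := by decide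

theorem mul_ne_x : ∀ s t : SgpB, s * t ≠ .x := by decide

theorem eq_x_and_eq_y_of_mul_eq_xy : ∀ s t : SgpB, s.IsGenOrZero → s * t = .xy →
    s = .x ∧ t = .y := by decide

theorem mul_mul_ne_xy : ∀ s t u : SgpB, s * (t * u) ≠ .xy := by decide

theorem mul_ne_xyx : ∀ s t : SgpB, s.IsGenOrZero → t.IsGenOrZero → s * t ≠ .xyx := by decide

theorem mul_mul_eq_xyx : ∀ s t u : SgpB, s.IsGenOrZero → t.IsGenOrZero → u.IsGenOrZero →
    s * (t * u) = .xyx → s = .x ∧ t = .y ∧ u = .x ∨ s = .y ∧ t = .x ∧ u = .y := by decide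

end SgpB

section Words

variable {X : Type*}

theorem evalWord_cons {S : Type*} [Mul S] (φ : X → S) (a b : X) (l : List X) :
    evalWord φ a (b :: l) = φ a * evalWord φ b l := rfl

theorem evalWord_eq_zero_of_three_le_length (φ : X → SgpB) (a : X) (u : List X)
    (h : 3 ≤ u.length) : evalWord φ a u = .zero := by
  rcases u with _ | ⟨b, _ | ⟨c, _ | ⟨d, l⟩⟩⟩
  · simp at h
  · simp at h
  · simp at h
  · exact SgpB.mul_mul_mul_eq_zero _ _ _ _

theorem evalWord_eq_zero_of_not_isChain (φ : X → SgpB) (a : X) (u : List X)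
    (h : ¬ (a :: u).IsChain (· ≠ ·)) : evalWord φ a u = .zero := by
  induction u generalizing a with
  | nil => simp at h
  | cons b l ih =>
    rw [evalWord_cons]
    by_cases hab : a = b
    · subst hab
      cases l with
      | nil => exact SgpB.mul_self _
      | cons c l => rw [evalWord_cons, ← mul_assoc, SgpB.mul_self, SgpB.zero_mul]
    · rw [ih b (fun hc => h (List.isChain_cons_cons.mpr ⟨hab, hc⟩)), SgpB.mul_zero]

theorem evalWord_eq_zero_of_not_trivial42 (φ : X → SgpB) (a : X) (u : List X)
    (h : ¬ Trivial42 (a :: u)) : evalWord φ a u = .zero := by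
  by_cases hl : u.length < 3
  · exact evalWord_eq_zero_of_not_isChain φ a u fun hc => h ⟨by simpa using hl, hc⟩
  · exact evalWord_eq_zero_of_three_le_length φ a u (by omega)

theorem eq_nil_of_evalWord_eq_x {φ : X → SgpB} {b : X} {v : List X}
    (h : evalWord φ b v = .x) : v = [] ∧ φ b = .x := by
  cases v with
  | nil => exact ⟨rfl, h⟩
  | cons c l => exact absurd h (SgpB.mul_ne_x _ _)

theorem exists_eq_singleton_of_evalWord_eq_xy {φ : X → SgpB} (hφ : ∀ t, (φ t).IsGenOrZero)
    {b : X} {v : List X}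
    (h : evalWord φ b v = .xy) : ∃ c, v = [c] ∧ φ b = .x ∧ φ c = .y := by
  rcases v with _ | ⟨c, _ | ⟨d, l⟩⟩
  · rcases hφ b with hb | hb | hb <;> simp_all [evalWord]
  · exact ⟨c, rfl, SgpB.eq_x_and_eq_y_of_mul_eq_xy _ _ (hφ b) h⟩
  · exact absurd h (SgpB.mul_mul_ne_xy _ _ _)

theorem exists_eq_pair_of_evalWord_eq_xyx {φ : X → SgpB} (hφ : ∀ t, (φ t).IsGenOrZero)
    {b : X} {v : List X}
    (h : evalWord φ b v = .xyx) : ∃ c d, v = [c, d] ∧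
      (φ b = .x ∧ φ c = .y ∧ φ d = .x ∨ φ b = .y ∧ φ c = .x ∧ φ d = .y) := by
  rcases v with _ | ⟨c, _ | ⟨d, _ | ⟨e, l⟩⟩⟩
  · rcases hφ b with hb | hb | hb <;> simp_all [evalWord]
  · exact absurd h (SgpB.mul_ne_xyx _ _ (hφ b) (hφ c))
  · exact ⟨c, d, rfl, SgpB.mul_mul_eq_xyx _ _ _ (hφ b) (hφ c) (hφ d) h⟩
  · simp [evalWord_eq_zero_of_three_le_length φ b (c :: d :: e :: l) (by simp)] at h

open Classical in
noncomputable def substXY (S T : Set X) (t : X) : SgpB :=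
  if t ∈ S then .x else if t ∈ T then .y else .zero

theorem substXY_isGenOrZero (S T : Set X) (t : X) : (substXY S T t).IsGenOrZero := by
  unfold substXY SgpB.IsGenOrZero; split_ifs <;> simp

theorem substXY_eq_x {S T : Set X} {t : X} : substXY S T t = .x ↔ t ∈ S := by
  unfold substXY; split_ifs <;> simp_all

theorem substXY_eq_y {S T : Set X} {t : X} : substXY S T t = .y ↔ t ∉ S ∧ t ∈ T := by
  unfold substXY; split_ifs <;> simp_all

theorem eq_singleton_of_forall_evalWord_eq {p b : X} {v : List X}
    (h : ∀ φ : X → SgpB, evalWord φ p [] = evalWord φ b v) : b :: v = [p] := by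
  have hx : evalWord (substXY {p} ∅) b v = .x := by
    rw [← h]; exact substXY_eq_x.2 rfl
  obtain ⟨rfl, hb⟩ := eq_nil_of_evalWord_eq_x hx
  rw [substXY_eq_x.1 hb]

theorem eq_pair_of_forall_evalWord_eq {p q b : X} {v : List X} (hpq : p ≠ q)
    (h : ∀ φ : X → SgpB, evalWord φ p [q] = evalWord φ b v) : b :: v = [p, q] := by
  have hxy : evalWord (substXY {p} {q}) b v = .xy := by
    rw [← h]; simp +decide [evalWord, substXY, hpq.symm]
  obtain ⟨c, rfl, hb, hc⟩ := exists_eq_singleton_of_evalWord_eq_xy (substXY_isGenOrZero _ _) hxy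
  rw [substXY_eq_x.1 hb, (substXY_eq_y.1 hc).2]

theorem eq_or_eq_swap_of_forall_evalWord_eq {p q b : X} {v : List X} (hpq : p ≠ q)
    (h : ∀ φ : X → SgpB, evalWord φ p [q, p] = evalWord φ b v) :
    b :: v = [p, q, p] ∨ b :: v = [q, p, q] := by
  have hxyx : evalWord (substXY {p} {q}) b v = .xyx := by
    rw [← h]; simp +decide [evalWord, substXY, hpq.symm]
  obtain ⟨c, d, rfl, hv⟩ := exists_eq_pair_of_evalWord_eq_xyx (substXY_isGenOrZero _ _) hxyx
  simp only [substXY_eq_x, substXY_eq_y, Set.mem_singleton_iff] at hv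
  rcases hv with ⟨rfl, ⟨-, rfl⟩, rfl⟩ | ⟨⟨-, rfl⟩, rfl, ⟨-, rfl⟩⟩
  · exact .inl rfl
  · exact .inr rfl

theorem eq_or_eq_reverse_of_forall_evalWord_eq {p q r b : X} {v : List X}
    (hpq : p ≠ q) (hqr : q ≠ r) (hpr : p ≠ r)
    (h : ∀ φ : X → SgpB, evalWord φ p [q, r] = evalWord φ b v) :
    b :: v = [p, q, r] ∨ b :: v = [r, q, p] := by
  have hxyx : evalWord (substXY {p, r} {q}) b v = .xyx := by
    rw [← h]; simp +decide [evalWord, substXY, hpq.symm, hqr]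
  obtain ⟨c, d, rfl, hv⟩ := exists_eq_pair_of_evalWord_eq_xyx (substXY_isGenOrZero _ _) hxyx
  have hp : evalWord (substXY {p} {q}) b [c, d] = .zero := by
    rw [← h]; simp +decide [evalWord, substXY, hpq.symm, hpr.symm, hqr.symm]
  have hr : evalWord (substXY {r} {q}) b [c, d] = .zero := by
    rw [← h]; simp +decide [evalWord, substXY, hpq, hpr, hqr]
  simp only [substXY_eq_x, substXY_eq_y, Set.mem_insert_iff, Set.mem_singleton_iff] at hv
  -- `substXY {p} {q}` and `substXY {r} {q}` send `p q r` to 0 but `p q p`, `q p q`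
  -- (resp. `r q r`, `q r q`) to xyx.
  rcases hv with ⟨rfl | rfl, ⟨-, rfl⟩, rfl | rfl⟩ | ⟨⟨-, rfl⟩, rfl | rfl, ⟨-, rfl⟩⟩
  · simp +decide [evalWord, substXY, hpq.symm] at hp
  · exact .inl rfl
  · exact .inr rfl
  · simp +decide [evalWord, substXY, hqr] at hr
  · simp +decide [evalWord, substXY, hpq.symm] at hp
  · simp +decide [evalWord, substXY, hqr] at hr

def IsReversalOrBraid (w w' : List X) : Prop :=
  (∃ p q r : X, p ≠ q ∧ q ≠ r ∧ p ≠ r ∧ w = [p, q, r] ∧ w' = [r, q, p]) ∨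
    (∃ p q : X, p ≠ q ∧ w = [p, q, p] ∧ w' = [q, p, q])

theorem IsReversalOrBraid.symm {w w' : List X} (h : IsReversalOrBraid w w') :
    IsReversalOrBraid w' w := by
  rcases h with ⟨p, q, r, hpq, hqr, hpr, rfl, rfl⟩ | ⟨p, q, hpq, rfl, rfl⟩
  · exact .inl ⟨r, q, p, hqr.symm, hpq.symm, hpr.symm, rfl, rfl⟩
  · exact .inr ⟨q, p, hpq.symm, rfl, rfl⟩

theorem IsReversalOrBraid.evalWord_eq {a b : X} {u v : List X}
    (h : IsReversalOrBraid (a :: u) (b :: v)) (φ : X → SgpB) :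
    evalWord φ a u = evalWord φ b v := by
  rcases h with ⟨p, q, r, -, -, -, hu, hv⟩ | ⟨p, q, -, hu, hv⟩
  · simp only [List.cons.injEq] at hu hv
    obtain ⟨rfl, rfl⟩ := hu
    obtain ⟨rfl, rfl⟩ := hv
    exact SgpB.mul_mul_rev _ _ _
  · simp only [List.cons.injEq] at hu hv
    obtain ⟨rfl, rfl⟩ := hu
    obtain ⟨rfl, rfl⟩ := hv
    exact SgpB.braid _ _

theorem isReversalOrBraid_of_trivial42 {a b : X} {u v : List X} (ht : Trivial42 (a :: u))
    (hne : a :: u ≠ b :: v) (h : ∀ φ : X → SgpB, evalWord φ a u = evalWord φ b v) :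
    IsReversalOrBraid (a :: u) (b :: v) := by
  have hl : u.length < 3 := by simpa using ht.1
  have hc : (a :: u).IsChain (· ≠ ·) := ht.2
  rcases u with _ | ⟨q, _ | ⟨r, _ | ⟨s, l⟩⟩⟩
  · exact absurd (eq_singleton_of_forall_evalWord_eq h).symm hne
  · exact absurd (eq_pair_of_forall_evalWord_eq (by simpa using hc) h).symm hne
  · obtain ⟨haq, hqr⟩ : a ≠ q ∧ q ≠ r := by simpa using hc
    by_cases har : a = r
    · subst har
      rcases eq_or_eq_swap_of_forall_evalWord_eq haq h with he | he
      · exact absurd he.symm hne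
      · exact .inr ⟨a, q, haq, rfl, he⟩
    · rcases eq_or_eq_reverse_of_forall_evalWord_eq haq hqr har h with he | he
      · exact absurd he.symm hne
      · exact .inl ⟨a, q, r, haq, hqr, har, rfl, he⟩
  · simp only [List.length_cons] at hl; omega

end Words

/-- B satisfies a non-trivial identity `a :: u ≈ b :: v` iff either neither side is
(4,2)-trivial, or the identity has the form abc ≈ cba, or the form aba ≈ bab. -/
theorem SgpB_satisfies_iff {X : Type*} (a b : X) (u v : List X)
    (hne : a :: u ≠ b :: v) :
    (∀ φ : X → SgpB, evalWord φ a u = evalWord φ b v) ↔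
      ((¬ Trivial42 (a :: u) ∧ ¬ Trivial42 (b :: v)) ∨
        (∃ p q r : X, p ≠ q ∧ q ≠ r ∧ p ≠ r ∧
          a :: u = [p, q, r] ∧ b :: v = [r, q, p]) ∨
        (∃ p q : X, p ≠ q ∧ a :: u = [p, q, p] ∧ b :: v = [q, p, q])) := by
  constructor
  · intro h
    by_cases ha : Trivial42 (a :: u)
    · exact .inr (isReversalOrBraid_of_trivial42 ha hne h)
    by_cases hb : Trivial42 (b :: v)
    · exact .inr (isReversalOrBraid_of_trivial42 hb hne.symm fun φ => (h φ).symm).symm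
    exact .inl ⟨ha, hb⟩
  · rintro (⟨ha, hb⟩ | hrb) φ
    · rw [evalWord_eq_zero_of_not_trivial42 φ a u ha, evalWord_eq_zero_of_not_trivial42 φ b v hb]
    · exact IsReversalOrBraid.evalWord_eq hrb φ
end

section
/- The identities a² ≈ bcde, abc ≈ cba, and aba ≈ bab form an identity basis for the variety generated by the semigroup B = ⟨x, y | x² = 0, y² = 0, xyx = yxy⟩: every identity holding in B is a consequence of these three identities. -/
/-!
In a semigroup satisfying the three identities all squares coincide, and every product with
four or more factors, or with two equal adjacent factors, equals this common square. So every
word other than a square-free word of length at most three evaluates to it; in `B` such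
words evaluate to `0`.

Square-free short words are separated in `B` by two-colourings `κ : X → Bool` of the alphabet,
read as the substitution `t ↦ x` or `t ↦ y`: a word then evaluates to the alternating product
of its length starting with the colour of its first letter if its colours alternate, and to
`0` otherwise. Comparing both sides of an identity of `B` under a few colourings shows that it
is trivial or an instance of `abc ≈ cba` or `aba ≈ bab`.
-/

namespace SgpB

instance inst_s10 : DecidableEq SgpB := fun a b => by
  cases a <;> cases b <;> first | exact isTrue rfl | exact isFalse nofun

instance inst_s10_2 : Fintype SgpB :=
  ⟨{x, y, xy, yx, xyx, zero}, fun a => by cases a <;> decide⟩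

def gen : Bool → SgpB
  | true => x
  | false => y

/-- The alternating product of `n + 1` generators starting with `gen b`. -/
def alt : Bool → ℕ → SgpB
  | true, 0 => x
  | false, 0 => y
  | true, 1 => xy
  | false, 1 => yx
  | _, 2 => xyx
  | _, _ => zero

theorem gen_mul_alt (p q : Bool) (n : ℕ) :
    gen p * alt q n = if p = q then zero else alt p (n + 1) := by
  match n with
  | 0 | 1 | 2 | _ + 3 => cases p <;> cases q <;> rfl

theorem alt_ne_zero (p : Bool) {n : ℕ} (hn : n ≤ 2) : alt p n ≠ zero := by
  interval_cases n <;> cases p <;> decide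

theorem le_two_of_alt_ne_zero {p : Bool} {n : ℕ} (h : alt p n ≠ zero) : n ≤ 2 := by
  match n with
  | 0 | 1 | 2 => omega
  | _ + 3 => cases p <;> exact absurd rfl h

theorem eq_of_alt_eq {p q : Bool} {n m : ℕ} (h : alt p n = alt q m) (hn : alt p n ≠ zero) :
    n = m := by
  have hm := le_two_of_alt_ne_zero (h ▸ hn)
  have hn := le_two_of_alt_ne_zero hn
  interval_cases n <;> interval_cases m <;> cases p <;> cases q <;>
    first | rfl | exact absurd h nofun

theorem gen_injective : Function.Injective gen := by
  decide

theorem eq_of_gen_mul_gen_eq {p q p' q' : Bool} (hpq : p ≠ q)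
    (h : gen p * gen q = gen p' * gen q') : p' = p ∧ q' = q := by
  revert hpq h
  cases p <;> cases q <;> cases p' <;> cases q' <;> decide

theorem gen_mul_gen_mul_gen_eq_xyx {p q r : Bool} :
    gen p * (gen q * gen r) = xyx ↔ p ≠ q ∧ q ≠ r := by
  cases p <;> cases q <;> cases r <;> decide

end SgpB

open SgpB

variable {X : Type*}

theorem evalWord_gen_comp (κ : X → Bool) (a : X) (u : List X) :
    evalWord (gen ∘ κ) a u =
      if (a :: u).IsChain (fun s t => κ s ≠ κ t) then alt (κ a) u.length else zero := by
  induction u generalizing a with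
  | nil => cases h : κ a <;> simp [evalWord, gen, alt, h]
  | cons c u ih =>
    have hzero : gen (κ a) * zero = zero := by cases κ a <;> rfl
    simp only [evalWord, ih, List.isChain_cons_cons, List.length_cons, Function.comp_apply]
    split_ifs <;> simp_all [gen_mul_alt]

theorem evalWord_gen_comp_of_ne_zero {κ : X → Bool} {a : X} {u : List X}
    (h : evalWord (gen ∘ κ) a u ≠ zero) : evalWord (gen ∘ κ) a u = alt (κ a) u.length := by
  rw [evalWord_gen_comp] at h ⊢
  split_ifs at h ⊢
  · rfl
  · exact absurd rfl h

/-- For words of length at most three, having no two equal adjacent letters is square-freeness.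
These are exactly the words that are not identically `0` in `B`. -/
def IsShortSquarefree (w : List X) : Prop :=
  w.length ≤ 3 ∧ w.IsChain (· ≠ ·)

theorem isShortSquarefree_of_evalWord_ne_zero {κ : X → Bool} {a : X} {u : List X}
    (h : evalWord (gen ∘ κ) a u ≠ zero) : IsShortSquarefree (a :: u) := by
  rw [evalWord_gen_comp] at h
  split_ifs at h with hchain
  · have := le_two_of_alt_ne_zero h
    exact ⟨by simp only [List.length_cons]; omega,
      hchain.imp fun s t hst hs => hst (congrArg κ hs)⟩
  · exact absurd rfl h

theorem IsShortSquarefree.exists_evalWord_ne_zero {a : X} {u : List X}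
    (h : IsShortSquarefree (a :: u)) : ∃ κ : X → Bool, evalWord (gen ∘ κ) a u ≠ zero := by
  classical
  -- colour the second letter `false` and every other letter `true`
  refine ⟨fun t => decide (u.head? ≠ some t), ?_⟩
  obtain ⟨hlen, hchain⟩ := h
  rw [evalWord_gen_comp, if_pos]
  · exact alt_ne_zero _ (by simp only [List.length_cons] at hlen; omega)
  · rcases u with _ | ⟨c, _ | ⟨d, _ | ⟨g, l⟩⟩⟩
    · exact List.isChain_singleton a
    · simp_all [eq_comm]
    · simp_all [eq_comm]
    · simp only [List.length_cons] at hlen; omega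

theorem IsShortSquarefree.of_forall_evalWord_eq {a b : X} {u v : List X}
    (h : IsShortSquarefree (a :: u)) (hB : ∀ φ : X → SgpB, evalWord φ a u = evalWord φ b v) :
    IsShortSquarefree (b :: v) :=
  let ⟨_, hκ⟩ := h.exists_evalWord_ne_zero
  isShortSquarefree_of_evalWord_ne_zero (hB _ ▸ hκ)

theorem IsShortSquarefree.length_eq_of_forall_evalWord_eq {a b : X} {u v : List X}
    (h : IsShortSquarefree (a :: u)) (hB : ∀ φ : X → SgpB, evalWord φ a u = evalWord φ b v) :
    u.length = v.length := by
  obtain ⟨κ, hκa⟩ := h.exists_evalWord_ne_zero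
  have hκb : evalWord (gen ∘ κ) b v ≠ zero := hB _ ▸ hκa
  have heq := hB (gen ∘ κ)
  rw [evalWord_gen_comp_of_ne_zero hκa, evalWord_gen_comp_of_ne_zero hκb] at heq
  exact eq_of_alt_eq heq (evalWord_gen_comp_of_ne_zero hκa ▸ hκa)

theorem eq_of_forall_gen_eq {a b : X} (h : ∀ κ : X → Bool, gen (κ a) = gen (κ b)) : b = a := by
  classical
  simpa using gen_injective (h fun t => decide (t = a))

theorem eq_and_eq_of_forall_gen_mul_gen_eq {a c b e : X} (hac : a ≠ c)
    (h : ∀ κ : X → Bool, gen (κ a) * gen (κ c) = gen (κ b) * gen (κ e)) : b = a ∧ e = c := by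
  classical
  have ha := eq_of_gen_mul_gen_eq (by simpa using hac.symm) (h fun t => decide (t = a))
  have hc := eq_of_gen_mul_gen_eq (by simpa using hac) (h fun t => decide (t = c))
  simp only [decide_true, decide_eq_true_eq] at ha hc
  exact ⟨ha.1, hc.2⟩

inductive BasisStep : List X → List X → Prop
  | refl (w : List X) : BasisStep w w
  | reverse (p q r : X) : BasisStep [p, q, r] [r, q, p]
  | swap (p q : X) : BasisStep [p, q, p] [q, p, q]

theorem basisStep_of_forall_alternating {a c d b e f : X} (hac : a ≠ c) (hcd : c ≠ d)
    (h : ∀ κ : X → Bool, (κ a ≠ κ c ∧ κ c ≠ κ d ↔ κ b ≠ κ e ∧ κ e ≠ κ f)) :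
    BasisStep [a, c, d] [b, e, f] := by
  classical
  -- `h₁` pins down the middle letter, `h₂` the set of end letters, and `h₃`, `h₄` exclude
  -- equal end letters `b = f` unless `a = d`
  have h₁ := h fun t => decide (t ≠ c)
  have h₂ := h fun t => decide (t = a ∨ t = d)
  have h₃ := h fun t => decide (t = a)
  have h₄ := h fun t => decide (t = d)
  simp only [ne_eq, decide_eq_decide] at h₁ h₂ h₃ h₄
  have : (b = a ∧ e = c ∧ f = d) ∨ (b = d ∧ e = c ∧ f = a) ∨ (d = a ∧ b = c ∧ e = a ∧ f = c) := by
    grind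
  rcases this with ⟨rfl, rfl, rfl⟩ | ⟨rfl, rfl, rfl⟩ | ⟨rfl, rfl, rfl, rfl⟩
  · exact .refl _
  · exact .reverse _ _ _
  · exact .swap _ _

theorem IsShortSquarefree.basisStep_of_forall_evalWord_eq {a b : X} {u v : List X}
    (h : IsShortSquarefree (a :: u)) (hB : ∀ φ : X → SgpB, evalWord φ a u = evalWord φ b v) :
    BasisStep (a :: u) (b :: v) := by
  have hlen := h.length_eq_of_forall_evalWord_eq hB
  have hκ (κ : X → Bool) : evalWord (gen ∘ κ) a u = evalWord (gen ∘ κ) b v := hB _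
  obtain ⟨hu, hchain⟩ := h
  rcases u with _ | ⟨c, _ | ⟨d, _ | ⟨g, l⟩⟩⟩ <;> rcases v with _ | ⟨e, _ | ⟨f, _ | ⟨g', l'⟩⟩⟩ <;>
    simp only [List.length_cons, List.length_nil] at hlen hu <;> try omega
  · obtain rfl := eq_of_forall_gen_eq hκ
    exact .refl _
  · obtain ⟨rfl, rfl⟩ := eq_and_eq_of_forall_gen_mul_gen_eq (by simpa using hchain) hκ
    exact .refl _
  · simp only [List.isChain_cons_cons, List.isChain_singleton, and_true] at hchain
    refine basisStep_of_forall_alternating hchain.1 hchain.2 fun κ => ?_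
    rw [← gen_mul_gen_mul_gen_eq_xyx, ← gen_mul_gen_mul_gen_eq_xyx]
    exact Eq.congr_left (hκ κ)

section Nilpotent

variable {S : Type*} [Semigroup S]

theorem mul_self_eq_mul_self (h1 : ∀ p q r s t : S, p * p = q * r * s * t) (p q : S) :
    p * p = q * q :=
  (h1 p q q q q).trans (h1 q q q q q).symm

theorem mul_self_mul (h1 : ∀ p q r s t : S, p * p = q * r * s * t) (p q : S) :
    p * p * q = q * q := by
  rw [h1 p q q q q]
  exact (h1 q (q * q) q q q).symm

theorem mul_mul_self (h1 : ∀ p q r s t : S, p * p = q * r * s * t) (p q : S) :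
    p * (q * q) = p * p := by
  rw [mul_self_eq_mul_self h1 q p, ← mul_assoc, mul_self_mul h1]

theorem evalWord_eq_mul_self (h1 : ∀ p q r s t : S, p * p = q * r * s * t) (ψ : X → S)
    {a : X} {u : List X} (h : ¬ IsShortSquarefree (a :: u)) : evalWord ψ a u = ψ a * ψ a := by
  rcases u with _ | ⟨c, _ | ⟨d, _ | ⟨g, l⟩⟩⟩
  · exact absurd ⟨by simp, List.isChain_singleton a⟩ h
  · obtain rfl : a = c := by simpa [IsShortSquarefree] using h
    rfl
  · simp only [IsShortSquarefree, List.length_cons, List.length_nil, List.isChain_cons_cons,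
      List.isChain_singleton, and_true] at h
    obtain rfl | rfl : a = c ∨ c = d := by tauto
    · rw [evalWord, evalWord, evalWord, ← mul_assoc, mul_self_mul h1, mul_self_eq_mul_self h1]
    · exact mul_mul_self h1 _ _
  · simp only [evalWord, ← mul_assoc]
    exact (h1 _ _ _ _ _).symm

theorem BasisStep.evalWord_eq (h2 : ∀ p q r : S, p * q * r = r * q * p)
    (h3 : ∀ p q : S, p * q * p = q * p * q) (ψ : X → S) {a b : X} {u v : List X}
    (h : BasisStep (a :: u) (b :: v)) : evalWord ψ a u = evalWord ψ b v := by
  cases h with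
  | refl => rfl
  | reverse => simpa only [evalWord, mul_assoc] using h2 _ _ _
  | swap => simpa only [evalWord, mul_assoc] using h3 _ _

end Nilpotent

/-- The identities a² ≈ bcde, abc ≈ cba and aba ≈ bab form an identity basis of
the variety generated by B: they hold in B, and every identity holding in B holds
in every semigroup satisfying these three identities. -/
theorem SgpB_identity_basis :
    ((∀ p q r s t : SgpB, p * p = q * r * s * t) ∧
      (∀ p q r : SgpB, p * q * r = r * q * p) ∧
      (∀ p q : SgpB, p * q * p = q * p * q)) ∧
    (∀ (X : Type) (a b : X) (u v : List X),
      (∀ φ : X → SgpB, evalWord φ a u = evalWord φ b v) →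
      ∀ (S : Type) [Semigroup S],
        (∀ p q r s t : S, p * p = q * r * s * t) →
        (∀ p q r : S, p * q * r = r * q * p) →
        (∀ p q : S, p * q * p = q * p * q) →
        ∀ ψ : X → S, evalWord ψ a u = evalWord ψ b v) := by
  refine ⟨⟨by decide, by decide, by decide⟩, fun X a b u v hB S _ h1 h2 h3 ψ => ?_⟩
  by_cases hu : IsShortSquarefree (a :: u)
  · exact (hu.basisStep_of_forall_evalWord_eq hB).evalWord_eq h2 h3 ψ
  · have hv : ¬ IsShortSquarefree (b :: v) := fun hv =>
      hu (hv.of_forall_evalWord_eq fun φ => (hB φ).symm)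
    rw [evalWord_eq_mul_self h1 ψ hu, evalWord_eq_mul_self h1 ψ hv]
    exact mul_self_eq_mul_self h1 _ _
end

section
/- The identities a² ≈ a³, a²b ≈ b²a, and abc ≈ abc² form an identity basis of the variety generated by the 5-element semigroup C_λ = ⟨x, y | x² = x³, xy = x, x²y = 0, y² = 0⟩. -/
/-- The 5-element semigroup C_λ = ⟨x, y | x² = x³, xy = x, x²y = 0, y² = 0⟩. -/
inductive CL : Type | x | x2 | y | xy | zero

def CL.mul : CL → CL → CL
  | .x, .x => .x2
  | .x, .x2 => .x2
  | .x, .y => .xy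
  | .x2, .x => .x2
  | .x2, .x2 => .x2
  | .y, .x => .y
  | .y, .x2 => .y
  | .xy, .x => .xy
  | .xy, .x2 => .xy
  | _, _ => .zero

instance : Semigroup CL where
  mul := CL.mul
  mul_assoc := by intro a b c; cases a <;> cases b <;> cases c <;> rfl

/-!
Write a word of length at least two as `a b r`. In a semigroup satisfying the three identities,
right multiplication on `S²` is commutative and idempotent (`t c d = t c c d = t d d c = t d c`
for `t ∈ S²`), so the value of `a b r` depends only on `a`, `b` and the set of letters of `r`.
If `b` recurs, the word equals `a e² (b r)` for every letter `e` of `b r`, and if `a` recurs too,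
it equals `e² (a b r)` for every letter `e` of the word. Conversely, the substitution `c ↦ y`,
others `↦ x`, into `C_λ` detects the content of a word and whether `c` is a non-recurring first
or second letter, and `a ↦ x`, `b ↦ y`, others `↦ x²`, detects the first letter `a` when the
second letter `b` does not recur. These are exactly the data the normal forms depend on.
-/

section mulWord

variable {X S : Type*} [Semigroup S]

def mulWord (ψ : X → S) (t : S) (l : List X) : S := l.foldl (fun s c => s * ψ c) t

@[simp] lemma mulWord_cons (ψ : X → S) (t : S) (c : X) (l : List X) :
    mulWord ψ t (c :: l) = mulWord ψ (t * ψ c) l := rfl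

lemma mulWord_mul (ψ : X → S) (s t : S) (l : List X) :
    mulWord ψ (s * t) l = s * mulWord ψ t l := by
  induction l generalizing t with
  | nil => rfl
  | cons c l ih => rw [mulWord_cons, mulWord_cons, mul_assoc, ih]

lemma evalWord_eq_mulWord (ψ : X → S) (a : X) (u : List X) :
    evalWord ψ a u = mulWord ψ (ψ a) u := by
  induction u generalizing a with
  | nil => rfl
  | cons b r ih => rw [evalWord, ih, mulWord_cons, mulWord_mul]

end mulWord

class CLIdentities (S : Type*) [Semigroup S] : Prop where
  sq_eq_cube : ∀ p : S, p * p = p * p * p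
  sq_mul_comm : ∀ p q : S, p * p * q = q * q * p
  mul_mul_sq : ∀ p q r : S, p * q * r = p * q * r * r

namespace CLIdentities

variable {X S : Type*} [Semigroup S] [CLIdentities S] (ψ : X → S)

lemma mul_mul_right_comm (p q c d : S) : p * q * c * d = p * q * d * c := by
  calc p * q * c * d = p * q * (c * c * d) := by rw [← mul_assoc, ← mul_assoc, ← mul_mul_sq]
    _ = p * q * (d * d * c) := by rw [sq_mul_comm]
    _ = p * q * d * c := by rw [← mul_assoc, ← mul_assoc, ← mul_mul_sq]

lemma mulWord_perm {l l' : List X} (h : l.Perm l') (p q : S) :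
    mulWord ψ (p * q) l = mulWord ψ (p * q) l' := by
  induction h generalizing p q with
  | nil => rfl
  | cons c _ ih => exact ih _ _
  | swap c d l => simp only [mulWord_cons, mul_mul_right_comm]
  | trans _ _ ih₁ ih₂ => exact (ih₁ p q).trans (ih₂ p q)

lemma mulWord_sq_cons_self (e : X) (l : List X) :
    mulWord ψ (ψ e * ψ e) (e :: l) = mulWord ψ (ψ e * ψ e) l := by
  rw [mulWord_cons, ← sq_eq_cube]

variable [DecidableEq X]

lemma mulWord_cons_of_mem {c : X} {l : List X} (h : c ∈ l) (p q : S) :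
    mulWord ψ (p * q) (c :: l) = mulWord ψ (p * q) l := by
  have hl := List.perm_cons_erase h
  rw [mulWord_perm ψ hl, mulWord_cons, mulWord_perm ψ hl, mulWord_cons, mulWord_cons,
    ← mul_mul_sq]

lemma mulWord_dedup (l : List X) (p q : S) :
    mulWord ψ (p * q) l.dedup = mulWord ψ (p * q) l := by
  induction l generalizing p q with
  | nil => rfl
  | cons c l ih =>
    by_cases hc : c ∈ l
    · rw [List.dedup_cons_of_mem hc, ih, mulWord_cons_of_mem ψ hc]
    · rw [List.dedup_cons_of_notMem hc, mulWord_cons, mulWord_cons, ih]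

lemma mulWord_congr {l l' : List X} (h : ∀ c, c ∈ l ↔ c ∈ l') (p q : S) :
    mulWord ψ (p * q) l = mulWord ψ (p * q) l' := by
  rw [← mulWord_dedup ψ l, ← mulWord_dedup ψ l']
  refine mulWord_perm ψ ((List.perm_ext_iff_of_nodup l.nodup_dedup l'.nodup_dedup).2 ?_) p q
  simpa only [List.mem_dedup] using h

lemma mulWord_sq_congr {e e' : X} {l l' : List X} (h : ∀ c, c ∈ e :: l ↔ c ∈ e' :: l') :
    mulWord ψ (ψ e * ψ e) l = mulWord ψ (ψ e' * ψ e') l' := by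
  have he' : e' ∈ e :: l := (h e').2 List.mem_cons_self
  calc mulWord ψ (ψ e * ψ e) l = mulWord ψ (ψ e * ψ e) (e' :: e :: l) := by
        rw [mulWord_cons_of_mem ψ he', mulWord_sq_cons_self]
    _ = mulWord ψ (ψ e' * ψ e') (e :: e :: l) := by
        simp only [mulWord_cons, sq_mul_comm (ψ e) (ψ e')]
    _ = mulWord ψ (ψ e' * ψ e') (e' :: l') :=
        mulWord_congr ψ (fun c => by rw [← h c]; simp) _ _
    _ = mulWord ψ (ψ e' * ψ e') l' := mulWord_sq_cons_self ψ e' l'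

lemma evalWord_eq_of_mem {a b : X} {r : List X} (hb : b ∈ a :: r) :
    evalWord ψ a (b :: r) = ψ a * mulWord ψ (ψ b * ψ b) r := by
  rw [evalWord_eq_mulWord, mulWord_cons, ← mulWord_mul, ← mul_assoc]
  rcases List.mem_cons.1 hb with rfl | hb
  · rw [← sq_eq_cube]
  · rw [← mulWord_cons_of_mem ψ hb, mulWord_cons]

lemma evalWord_eq_of_mem_of_mem {a b : X} {r : List X} (hb : b ∈ a :: r) (ha : a ∈ b :: r) :
    evalWord ψ a (b :: r) = mulWord ψ (ψ a * ψ a) (b :: r) := by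
  rw [evalWord_eq_of_mem ψ hb, mulWord_sq_congr ψ (e' := a) (l' := b :: r), ← mulWord_mul,
    ← mul_assoc, ← sq_eq_cube]
  exact fun c => ⟨List.mem_cons_of_mem a, fun hc => (List.mem_cons.1 hc).elim (· ▸ ha) id⟩

end CLIdentities

namespace CL

@[simp] lemma x_mul_x : x * x = x2 := rfl
@[simp] lemma x_mul_y : x * y = xy := rfl
@[simp] lemma y_mul_x : y * x = y := rfl
@[simp] lemma y_mul_y : y * y = zero := rfl

lemma mul_ne_x (p q : CL) : p * q ≠ x := by
  cases p <;> cases q <;> nofun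

protected lemma zero_mul (p : CL) : zero * p = zero := by
  cases p <;> rfl

lemma mul_x_of_ne_x {z : CL} (hz : z ≠ x) : z * x = z := by
  cases z <;> first | rfl | exact absurd rfl hz

lemma mul_y_of_ne_x {z : CL} (hz : z ≠ x) : z * y = zero := by
  cases z <;> first | rfl | exact absurd rfl hz

variable {X : Type*}

lemma mulWord_eq_self {φ : X → CL} {z : CL} {l : List X} (h : ∀ c ∈ l, z * φ c = z) :
    mulWord φ z l = z := by
  induction l with
  | nil => rfl
  | cons d l ih =>
    rw [mulWord_cons, h d List.mem_cons_self]
    exact ih fun c hc => h c (List.mem_cons_of_mem d hc)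

lemma mulWord_zero (φ : X → CL) (l : List X) : mulWord φ zero l = zero :=
  mulWord_eq_self fun c _ => CL.zero_mul (φ c)

lemma evalWord_cons_ne_x (φ : X → CL) (a b : X) (r : List X) : evalWord φ a (b :: r) ≠ x :=
  mul_ne_x _ _

variable [DecidableEq X]

def substY (c : X) (t : X) : CL := if t = c then y else x

def substXY (a b : X) (t : X) : CL := if t = a then x else if t = b then y else x2

lemma mulWord_substY {z : CL} (hz : z ≠ x) (c : X) (l : List X) :
    mulWord (substY c) z l = if c ∈ l then zero else z := by
  induction l with
  | nil => rfl
  | cons d l ih =>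
    rcases eq_or_ne d c with rfl | hd
    · simp [substY, mul_y_of_ne_x hz, mulWord_zero]
    · simp [substY, hd, mul_x_of_ne_x hz, ih, hd.symm]

lemma evalWord_substY (c a b : X) (r : List X) :
    evalWord (substY c) a (b :: r) = if c ∈ r then zero else substY c a * substY c b := by
  rw [evalWord_eq_mulWord, mulWord_cons, mulWord_substY (mul_ne_x _ _)]

section substY

variable {a b c : X} {r : List X}

lemma evalWord_substY_eq_x2_iff :
    evalWord (substY c) a (b :: r) = x2 ↔ c ∉ a :: b :: r := by
  rw [evalWord_substY]; unfold substY
  by_cases hr : c ∈ r <;> by_cases ha : a = c <;> by_cases hb : b = c <;> subst_vars <;>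
    simp_all [eq_comm]

lemma evalWord_substY_eq_y_iff :
    evalWord (substY c) a (b :: r) = y ↔ a = c ∧ c ∉ b :: r := by
  rw [evalWord_substY]; unfold substY
  by_cases hr : c ∈ r <;> by_cases ha : a = c <;> by_cases hb : b = c <;> subst_vars <;>
    simp_all [eq_comm]

lemma evalWord_substY_eq_xy_iff :
    evalWord (substY c) a (b :: r) = xy ↔ b = c ∧ c ∉ a :: r := by
  rw [evalWord_substY]; unfold substY
  by_cases hr : c ∈ r <;> by_cases ha : a = c <;> by_cases hb : b = c <;> subst_vars <;>
    simp_all [eq_comm]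

lemma evalWord_substY_eq_zero_iff (hab : a ≠ b) :
    evalWord (substY c) a (b :: r) = zero ↔ c ∈ r := by
  rw [evalWord_substY]; unfold substY
  by_cases hr : c ∈ r <;> by_cases ha : a = c <;> by_cases hb : b = c <;> subst_vars <;>
    simp_all

end substY

lemma evalWord_substXY_of_notMem {a b : X} {r : List X} (hb : b ∉ a :: r) :
    evalWord (substXY a b) a (b :: r) = xy := by
  have hba : b ≠ a := fun h => hb (h ▸ List.mem_cons_self)
  rw [evalWord_eq_mulWord, mulWord_cons]
  simp only [substXY, if_pos, if_neg hba, x_mul_y]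
  refine mulWord_eq_self fun c hc => ?_
  have hcb : c ≠ b := fun h => hb (h ▸ List.mem_cons_of_mem a hc)
  simp only [substXY, if_neg hcb]
  split_ifs <;> rfl

lemma evalWord_substXY_of_ne {a b a' : X} (hba : b ≠ a) (ha : a' ≠ a) (hb : a' ≠ b)
    (r : List X) : evalWord (substXY a b) a' (b :: r) = zero := by
  rw [evalWord_eq_mulWord, mulWord_cons]
  simp only [substXY, if_neg ha, if_neg hb, if_neg hba]
  exact mulWord_zero _ r

lemma eq_of_agree_single {a b : X} (h : ∀ φ : X → CL, evalWord φ a [] = evalWord φ b []) :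
    a = b := by
  by_contra hab
  have hy := h (substY a)
  simp only [evalWord, substY, if_pos, if_neg (Ne.symm hab)] at hy
  exact absurd hy nofun

section agree

variable {a a' b b' : X} {r r' : List X}

lemma mem_iff_of_agree (h : ∀ φ : X → CL, evalWord φ a (b :: r) = evalWord φ a' (b' :: r'))
    (c : X) : c ∈ a :: b :: r ↔ c ∈ a' :: b' :: r' := by
  rw [← not_iff_not, ← evalWord_substY_eq_x2_iff, ← evalWord_substY_eq_x2_iff, h]

lemma head_eq_and_notMem_iff_of_agree
    (h : ∀ φ : X → CL, evalWord φ a (b :: r) = evalWord φ a' (b' :: r')) (c : X) :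
    a = c ∧ c ∉ b :: r ↔ a' = c ∧ c ∉ b' :: r' := by
  rw [← evalWord_substY_eq_y_iff, ← evalWord_substY_eq_y_iff, h]

lemma second_eq_and_notMem_iff_of_agree
    (h : ∀ φ : X → CL, evalWord φ a (b :: r) = evalWord φ a' (b' :: r')) (c : X) :
    b = c ∧ c ∉ a :: r ↔ b' = c ∧ c ∉ a' :: r' := by
  rw [← evalWord_substY_eq_xy_iff, ← evalWord_substY_eq_xy_iff, h]

lemma mem_tail_iff_of_agree
    (h : ∀ φ : X → CL, evalWord φ a (b :: r) = evalWord φ a' (b' :: r'))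
    (hab : a ≠ b) (hab' : a' ≠ b') (c : X) : c ∈ r ↔ c ∈ r' := by
  rw [← evalWord_substY_eq_zero_iff hab, ← evalWord_substY_eq_zero_iff hab', h]

lemma head_eq_of_agree (h : ∀ φ : X → CL, evalWord φ a (b :: r) = evalWord φ a' (b :: r'))
    (hb : b ∉ a :: r) (hb' : b ∉ a' :: r') : a' = a := by
  by_contra ha
  have hxy := h (substXY a b)
  rw [evalWord_substXY_of_notMem hb, evalWord_substXY_of_ne (List.ne_of_not_mem_cons hb) ha
    (Ne.symm (List.ne_of_not_mem_cons hb'))] at hxy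
  exact absurd hxy nofun

end agree

end CL

open CLIdentities in
theorem evalWord_eq_of_agree {X S : Type*} [Semigroup S] [CLIdentities S] [DecidableEq X]
    {a a' b b' : X} {r r' : List X}
    (h : ∀ φ : X → CL, evalWord φ a (b :: r) = evalWord φ a' (b' :: r')) (ψ : X → S) :
    evalWord ψ a (b :: r) = evalWord ψ a' (b' :: r') := by
  have hmem := CL.mem_iff_of_agree h
  have hfst := CL.head_eq_and_notMem_iff_of_agree h
  have hsnd := CL.second_eq_and_notMem_iff_of_agree h
  by_cases hb : b ∈ a :: r
  · have hb' : b' ∈ a' :: r' := by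
      by_contra hb'
      obtain ⟨rfl, hb⟩ := (hsnd b').2 ⟨rfl, hb'⟩
      contradiction
    by_cases ha : a ∈ b :: r
    · have ha' : a' ∈ b' :: r' := by
        by_contra ha'
        obtain ⟨rfl, ha⟩ := (hfst a').2 ⟨rfl, ha'⟩
        contradiction
      rw [evalWord_eq_of_mem_of_mem ψ hb ha, evalWord_eq_of_mem_of_mem ψ hb' ha']
      exact mulWord_sq_congr ψ hmem
    · obtain ⟨ha_eq, ha'⟩ := (hfst a).1 ⟨rfl, ha⟩
      subst a'
      rw [evalWord_eq_of_mem ψ hb, evalWord_eq_of_mem ψ hb']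
      congr 1
      refine mulWord_sq_congr ψ fun c => ?_
      rcases eq_or_ne c a with rfl | hc
      · exact iff_of_false ha ha'
      · simpa [hc] using hmem c
  · obtain ⟨rfl, hb'⟩ := (hsnd b).1 ⟨rfl, hb⟩
    obtain rfl := CL.head_eq_of_agree h hb hb'
    rw [evalWord_eq_mulWord, evalWord_eq_mulWord, mulWord_cons, mulWord_cons]
    exact mulWord_congr ψ (CL.mem_tail_iff_of_agree h (List.ne_of_not_mem_cons hb).symm
      (List.ne_of_not_mem_cons hb').symm) _ _

/-- The identities a² ≈ a³, a²b ≈ b²a and abc ≈ abc² form an identity basis of the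
variety generated by C_λ: they hold in C_λ, and every identity holding in C_λ holds
in every semigroup satisfying these three identities. -/
theorem CL_identity_basis :
    ((∀ p : CL, p * p = p * p * p) ∧
      (∀ p q : CL, p * p * q = q * q * p) ∧
      (∀ p q r : CL, p * q * r = p * q * r * r)) ∧
    (∀ (X : Type) (a b : X) (u v : List X),
      (∀ φ : X → CL, evalWord φ a u = evalWord φ b v) →
      ∀ (S : Type) [Semigroup S],
        (∀ p : S, p * p = p * p * p) →
        (∀ p q : S, p * p * q = q * q * p) →
        (∀ p q r : S, p * q * r = p * q * r * r) →
        ∀ ψ : X → S, evalWord ψ a u = evalWord ψ b v) := by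
  classical
  refine ⟨⟨?_, ?_, ?_⟩, ?_⟩
  · intro p; cases p <;> rfl
  · intro p q; cases p <;> cases q <;> rfl
  · intro p q r; cases p <;> cases q <;> cases r <;> rfl
  intro X a b u v h S _ sq_eq_cube sq_mul_comm mul_mul_sq ψ
  have : CLIdentities S := ⟨sq_eq_cube, sq_mul_comm, mul_mul_sq⟩
  rcases u with _ | ⟨a₂, r⟩ <;> rcases v with _ | ⟨b₂, r'⟩
  · rw [CL.eq_of_agree_single h]
  · exact absurd (h fun _ => .x).symm (CL.evalWord_cons_ne_x _ _ _ _)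
  · exact absurd (h fun _ => .x) (CL.evalWord_cons_ne_x _ _ _ _)
  · exact evalWord_eq_of_agree h ψ
end

section
/- The 5-element semigroup F_λ = ⟨x, y | xy = xyx = xy², yx = yxy = yx², x² = x²y = x³, y² = y²x = y³⟩ satisfies a non-trivial identity u ≈ v if and only if h(u) = h(v) and h₂(u) = h₂(v), i.e., the first two letters of u and v coincide; consequently the single identity ab ≈ abc forms an identity basis of the variety it generates. -/
/-- The semigroup F_λ = ⟨x, y | xy = xyx = xy², yx = yxy = yx², x² = x²y = x³,
y² = y²x = y³⟩, with elements x, y, x², y², xy, yx, where x², y², xy, yx are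
left zeros. -/
inductive FL : Type | x | y | xx | yy | xy | yx

/-- The first generator of (a word representing) an element of F_λ. -/
def FL.hd : FL → Bool
  | .x | .xx | .xy => false
  | .y | .yy | .yx => true

def FL.mul : FL → FL → FL
  | .x, t => if t.hd then .xy else .xx
  | .y, t => if t.hd then .yy else .yx
  | s, _ => s

instance : Semigroup FL where
  mul := FL.mul
  mul_assoc := by intro a b c; cases a <;> cases b <;> cases c <;> rfl

/-- Second generator extractor. -/
def FL.tl : FL → Bool
  | .x | .xx | .yx => false
  | .y | .yy | .xy => true

lemma FL.lz : ∀ p q r : FL, p * q = p * q * r := by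
  intro p q r; cases p <;> cases q <;> cases r <;> rfl

/-- In a semigroup satisfying ab ≈ abc, evaluation of a word depends only on
its first two letters. -/
lemma evalWord_two {X S : Type*} [Semigroup S] (hS : ∀ p q r : S, p * q = p * q * r)
    (ψ : X → S) (a b : X) (u : List X) :
    evalWord ψ a (b :: u) = ψ a * ψ b := by
  induction u generalizing a b with
  | nil => rfl
  | cons e l ih =>
      show ψ a * evalWord ψ b (e :: l) = ψ a * ψ b
      rw [ih b e, ← mul_assoc, ← hS]

lemma FL.hd_mul_x (t : FL) : (FL.x * t).hd = false := by cases t <;> rfl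
lemma FL.hd_mul_y (t : FL) : (FL.y * t).hd = true := by cases t <;> rfl
lemma FL.tl_mul_x (t : FL) : (FL.x * t).tl = t.hd := by cases t <;> rfl
lemma FL.tl_mul_y (t : FL) : (FL.y * t).tl = t.hd := by cases t <;> rfl

/-- F_λ satisfies a non-trivial identity (both sides of length ≥ 2) iff the first
two letters of the two sides coincide; consequently ab ≈ abc is an identity basis:
it holds in F_λ, and every identity of F_λ follows from it. -/
theorem FL_satisfies_iff_and_basis {X : Type*} (a b c d : X) (u v : List X)
    (hne : a :: b :: u ≠ c :: d :: v) :
    ((∀ φ : X → FL, evalWord φ a (b :: u) = evalWord φ c (d :: v)) ↔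
      (a = c ∧ b = d)) ∧
    (∀ p q r : FL, p * q = p * q * r) ∧
    ((∀ φ : X → FL, evalWord φ a (b :: u) = evalWord φ c (d :: v)) →
      ∀ (S : Type) [Semigroup S],
        (∀ p q r : S, p * q = p * q * r) →
        ∀ ψ : X → S, evalWord ψ a (b :: u) = evalWord ψ c (d :: v)) := by
  classical
  have fwd : (∀ φ : X → FL, evalWord φ a (b :: u) = evalWord φ c (d :: v)) →
      a = c ∧ b = d := by
    intro h
    have hac : a = c := by
      by_contra hac
      set φ : X → FL := fun z => if z = a then .x else .y with hφ
      have h1 := h φ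
      rw [evalWord_two FL.lz, evalWord_two FL.lz] at h1
      have ha : φ a = .x := by simp [hφ]
      have hc : φ c = .y := by simp [hφ]; exact fun h' => hac h'.symm
      rw [ha, hc] at h1
      have := congrArg FL.hd h1
      rw [FL.hd_mul_x, FL.hd_mul_y] at this
      exact Bool.noConfusion this
    refine ⟨hac, ?_⟩
    by_contra hbd
    set φ : X → FL := fun z => if z = b then .x else .y with hφ
    have h1 := h φ
    rw [evalWord_two FL.lz, evalWord_two FL.lz, ← hac] at h1
    have hb : φ b = .x := by simp [hφ]
    have hd : φ d = .y := by simp [hφ]; exact fun h' => hbd h'.symm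
    rw [hb, hd] at h1
    have h2 := congrArg FL.tl h1
    rcases (by by_cases h' : a = b <;> simp [hφ, h'] : φ a = .x ∨ φ a = .y) with h3 | h3
    · rw [h3, FL.tl_mul_x, FL.tl_mul_x] at h2; exact Bool.noConfusion h2
    · rw [h3, FL.tl_mul_y, FL.tl_mul_y] at h2; exact Bool.noConfusion h2
  refine ⟨⟨fwd, fun ⟨hac, hbd⟩ φ => ?_⟩, FL.lz, fun h S _ hS ψ => ?_⟩
  · rw [evalWord_two FL.lz, evalWord_two FL.lz, hac, hbd]
  · obtain ⟨hac, hbd⟩ := fwd h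
    rw [evalWord_two hS, evalWord_two hS, hac, hbd]
end
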